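/- If h(x, x1, x2, x3) = 0, i.e., det B3(x, x1, x2, x3) = -4·d(x,x1)^2·d(x,x2)^2·d(x,x3)^2, then at least one of the betweenness relations L(x1, x, x2), L(x2, x, x3), or L(x3, x, x1) holds, where L(a, b, c) means d(a,c) = d(a,b) + d(b,c). -/
import Mathlib

/-- The `3 × 3` matrix `B3(x, x1, x2, x3)` with `(k,ℓ)`-entry
`(1/2)(d(x,x_k)² + d(x,x_ℓ)² - d(x_k,x_ℓ)²)`. -/
noncomputable def B3 {X : Type*} [MetricSpace X] (x x1 x2 x3 : X) :
    Matrix (Fin 3) (Fin 3) ℝ :=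
  Matrix.of fun k ℓ =>
    (1 / 2) * (dist x (![x1, x2, x3] k) ^ 2 + dist x (![x1, x2, x3] ℓ) ^ 2
      - dist (![x1, x2, x3] k) (![x1, x2, x3] ℓ) ^ 2)

/-- `L a b c` : `b` lies between `a` and `c`. -/
def MBetween {X : Type*} [MetricSpace X] (a b c : X) : Prop :=
  dist a c = dist a b + dist b c

set_option maxHeartbeats 1000000 in

lemma key (a b c p q r : ℝ)
    (ha : 0 ≤ a) (hb : 0 ≤ b) (hc : 0 ≤ c)
    (hp0 : 0 ≤ p) (hq0 : 0 ≤ q) (hr0 : 0 ≤ r)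
    (hp1 : p ≤ a + b) (hp2 : a ≤ p + b) (hp3 : b ≤ p + a)
    (hq1 : q ≤ b + c) (hq2 : b ≤ q + c) (hq3 : c ≤ q + b)
    (hr1 : r ≤ c + a) (hr2 : c ≤ r + a) (hr3 : a ≤ r + c)
    (H : 5*a^2*b^2*c^2
        + 2*((a^2+b^2-p^2)/2)*((b^2+c^2-q^2)/2)*((a^2+c^2-r^2)/2)
        - a^2*((b^2+c^2-q^2)/2)^2 - b^2*((a^2+c^2-r^2)/2)^2
        - c^2*((a^2+b^2-p^2)/2)^2 = 0) :
    p = a + b ∨ q = b + c ∨ r = c + a := by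
  rcases eq_or_lt_of_le ha with ha0 | ha'
  · left; linarith [hp1, hp3]
  rcases eq_or_lt_of_le hb with hb0 | hb'
  · left; linarith [hp1, hp2]
  rcases eq_or_lt_of_le hc with hc0 | hc'
  · right; left; linarith [hq1, hq2]
  obtain ⟨u, hu⟩ : ∃ u : ℝ, u = (a^2+b^2-p^2)/2 := ⟨_, rfl⟩
  obtain ⟨v, hv⟩ : ∃ v : ℝ, v = (b^2+c^2-q^2)/2 := ⟨_, rfl⟩
  obtain ⟨w, hw⟩ : ∃ w : ℝ, w = (a^2+c^2-r^2)/2 := ⟨_, rfl⟩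
  rw [← hu, ← hv, ← hw] at H
  have hu1 : -(a*b) ≤ u := by nlinarith [mul_nonneg (by linarith : (0:ℝ) ≤ a+b-p) (by linarith : (0:ℝ) ≤ a+b+p)]
  have hu2 : u ≤ a*b := by nlinarith [mul_nonneg (by linarith : (0:ℝ) ≤ p+b-a) (by linarith : (0:ℝ) ≤ p+a-b)]
  have hv1 : -(b*c) ≤ v := by nlinarith [mul_nonneg (by linarith : (0:ℝ) ≤ b+c-q) (by linarith : (0:ℝ) ≤ b+c+q)]
  have hv2 : v ≤ b*c := by nlinarith [mul_nonneg (by linarith : (0:ℝ) ≤ q+c-b) (by linarith : (0:ℝ) ≤ q+b-c)]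
  have hw1 : -(a*c) ≤ w := by nlinarith [mul_nonneg (by linarith : (0:ℝ) ≤ c+a-r) (by linarith : (0:ℝ) ≤ c+a+r)]
  have hw2 : w ≤ a*c := by nlinarith [mul_nonneg (by linarith : (0:ℝ) ≤ r+a-c) (by linarith : (0:ℝ) ≤ r+c-a)]
  have E : (b^2*w - u*v)^2 = (a^2*b^2-u^2)*(b^2*c^2-v^2) + 4*a^2*b^4*c^2 := by
    linear_combination (-(b^2)) * H
  have huv1 : u*v ≤ a*b^2*c := by
    nlinarith [mul_nonneg (by linarith : (0:ℝ) ≤ a*b-u) (by linarith : (0:ℝ) ≤ b*c+v),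
      mul_nonneg (by linarith : (0:ℝ) ≤ a*b+u) (by linarith : (0:ℝ) ≤ b*c-v)]
  have huv2 : -(a*b^2*c) ≤ u*v := by
    nlinarith [mul_nonneg (by linarith : (0:ℝ) ≤ a*b+u) (by linarith : (0:ℝ) ≤ b*c+v),
      mul_nonneg (by linarith : (0:ℝ) ≤ a*b-u) (by linarith : (0:ℝ) ≤ b*c-v)]
  have hbw1 : b^2*w ≤ a*b^2*c := by
    nlinarith [mul_nonneg (sq_nonneg b) (by linarith : (0:ℝ) ≤ a*c - w)]
  have hbw2 : -(a*b^2*c) ≤ b^2*w := by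
    nlinarith [mul_nonneg (sq_nonneg b) (by linarith : (0:ℝ) ≤ w + a*c)]
  have habc : 0 ≤ a*b^2*c := by positivity
  have hle : (b^2*w - u*v)^2 ≤ (2*(a*b^2*c))^2 :=
    sq_le_sq' (by linarith) (by linarith)
  have hAB : 0 ≤ a^2*b^2 - u^2 := by
    nlinarith [mul_nonneg (by linarith : (0:ℝ) ≤ a*b - u) (by linarith : (0:ℝ) ≤ a*b + u)]
  have hBC : 0 ≤ b^2*c^2 - v^2 := by
    nlinarith [mul_nonneg (by linarith : (0:ℝ) ≤ b*c - v) (by linarith : (0:ℝ) ≤ b*c + v)]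
  have hge : (2*(a*b^2*c))^2 ≤ (b^2*w - u*v)^2 := by
    linarith [mul_nonneg hAB hBC, E]
  have hsq : (b^2*w - u*v)^2 = (2*(a*b^2*c))^2 := le_antisymm hle hge
  have hcases : (b^2*w - u*v - 2*(a*b^2*c)) * (b^2*w - u*v + 2*(a*b^2*c)) = 0 := by
    linear_combination hsq
  rcases mul_eq_zero.mp hcases with hcase | hcase
  · -- b²w - uv = 2ab²c : forces uv = -ab²c, then u = -ab or v = -bc
    have huv : u*v = -(a*b^2*c) := by linarith only [hcase, hbw1, huv2]
    have hsum : (a*b+u)*(b*c+v) + (a*b-u)*(b*c-v) = 0 := by linear_combination 2*huv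
    have h0 : (a*b+u)*(b*c+v) = 0 := by
      linarith only [hsum,
        mul_nonneg (by linarith only [hu1] : (0:ℝ) ≤ a*b+u) (by linarith only [hv1] : (0:ℝ) ≤ b*c+v),
        mul_nonneg (by linarith only [hu2] : (0:ℝ) ≤ a*b-u) (by linarith only [hv2] : (0:ℝ) ≤ b*c-v)]
    rcases mul_eq_zero.mp h0 with h1 | h1
    · left
      have h2 : (p - (a+b)) * (p + (a+b)) = 0 := by linear_combination (-2)*h1 + 2*hu
      rcases mul_eq_zero.mp h2 with h3 | h3 <;> linarith only [h3, hp0, ha, hb]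
    · right; left
      have h2 : (q - (b+c)) * (q + (b+c)) = 0 := by linear_combination (-2)*h1 + 2*hv
      rcases mul_eq_zero.mp h2 with h3 | h3 <;> linarith only [h3, hq0, hb, hc]
  · -- b²w - uv = -2ab²c : forces w = -ac
    have hbw : b^2*w = -(a*b^2*c) := by linarith only [hcase, hbw2, huv1]
    have hwac : w + a*c = 0 := by
      have hb2 : (b:ℝ)^2 ≠ 0 := by positivity
      have : b^2 * (w + a*c) = 0 := by linear_combination hbw
      exact (mul_eq_zero.mp this).resolve_left hb2
    right; right
    have h2 : (r - (c+a)) * (r + (c+a)) = 0 := by linear_combination (-2)*hwac + 2*hw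
    rcases mul_eq_zero.mp h2 with h3 | h3 <;> linarith only [h3, hr0, ha, hc]


theorem oja_kernel_zero_betweenness {X : Type*} [MetricSpace X] (x x1 x2 x3 : X)
    (h : (B3 x x1 x2 x3).det =
      -(4 * dist x x1 ^ 2 * dist x x2 ^ 2 * dist x x3 ^ 2)) :
    MBetween x1 x x2 ∨ MBetween x2 x x3 ∨ MBetween x3 x x1 := by
  simp only [B3, Matrix.det_fin_three, Matrix.of_apply, Matrix.cons_val', Matrix.cons_val_zero,
    Matrix.cons_val_one, Matrix.head_cons, Matrix.head_fin_const, Matrix.cons_val_two,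
    Matrix.tail_cons, dist_self, dist_comm x2 x1, dist_comm x3 x1, dist_comm x3 x2] at h
  have hkey := key (dist x x1) (dist x x2) (dist x x3)
    (dist x1 x2) (dist x2 x3) (dist x1 x3)
    dist_nonneg dist_nonneg dist_nonneg dist_nonneg dist_nonneg dist_nonneg
    (by simpa [dist_comm x1 x] using dist_triangle x1 x x2)
    (by have t := dist_triangle x x2 x1; rw [dist_comm x2 x1] at t; linarith only [t])
    (by have t := dist_triangle x x1 x2; linarith only [t])
    (by simpa [dist_comm x2 x] using dist_triangle x2 x x3)
    (by have t := dist_triangle x x3 x2; rw [dist_comm x3 x2] at t; linarith only [t])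
    (by have t := dist_triangle x x2 x3; linarith only [t])
    (by have t := dist_triangle x1 x x3; rw [dist_comm x1 x] at t; linarith only [t])
    (by have t := dist_triangle x x1 x3; linarith only [t])
    (by have t := dist_triangle x x3 x1; rw [dist_comm x3 x1] at t; linarith only [t])
    (by linear_combination h)
  rcases hkey with h1 | h1 | h1
  · left; rw [MBetween, dist_comm x1 x] at *; linarith only [h1]
  · right; left; rw [MBetween, dist_comm x2 x] at *; linarith only [h1]
  · right; right; rw [MBetween, dist_comm x3 x, dist_comm x3 x1] at *; linarith only [h1]
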